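/- arXiv:2101.06957 — 3 statements merged into one kernel-verified Lean document; each statement's English description precedes it below -/
import Mathlib

section
/- Let Σ be a symmetric positive semidefinite real N×N matrix with Σ_{kk} > 0, let Ψ_0, …, Ψ_H be real N×N matrices, and suppose the scaling denominator D_j := Σ_{h=0}^H (Ψ_h Σ Ψ_hᵀ)_{jj} is strictly positive. Then the generalized forecast-error variance decomposition entry θ_{jk} := (Σ_{kk}^{-1} Σ_{h=0}^H ((Ψ_h Σ)_{jk})²) / D_j satisfies 0 ≤ θ_{jk} ≤ 1. -/
open Matrix Finset

/-! The Gram matrix of the rows of `Ψ_h` and of the `k`-th unit vector with respect to `Σ` is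
positive semidefinite, so its `2 × 2` minors are nonnegative. This is the Cauchy–Schwarz
inequality `((Ψ_h Σ)_{jk})² ≤ (Ψ_h Σ Ψ_hᵀ)_{jj} Σ_{kk}`; summing over `h` bounds the numerator
of `θ_{jk}` by its denominator. -/

theorem Matrix.PosSemidef.sq_apply_le_mul_apply {n : Type*} {M : Matrix n n ℝ}
    (hM : M.PosSemidef) (i j : n) : M i j ^ 2 ≤ M i i * M j j := by
  have hdet : 0 ≤ (M.submatrix ![i, j] ![i, j]).det := (hM.submatrix ![i, j]).det_nonneg
  have hsymm : M j i = M i j := hM.isHermitian.apply i j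
  rw [det_fin_two] at hdet
  simp only [submatrix_apply, Matrix.cons_val_zero, Matrix.cons_val_one, hsymm] at hdet
  nlinarith

theorem Matrix.PosSemidef.sq_mul_apply_le {m n : Type*} [Finite m] [Fintype n]
    [DecidableEq n] {S : Matrix n n ℝ} (hS : S.PosSemidef) (A : Matrix m n ℝ) (j : m) (k : n) :
    (A * S) j k ^ 2 ≤ (A * S * Aᵀ) j j * S k k := by
  have hGram : (fromRows A (1 : Matrix n n ℝ) * S * (fromRows A 1)ᵀ).PosSemidef :=
    hS.mul_mul_conjTranspose_same _
  simpa [transpose_fromRows] using hGram.sq_apply_le_mul_apply (Sum.inl j) (Sum.inr k)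

theorem Matrix.PosSemidef.sum_sq_mul_apply_le {ι m n : Type*} [Finite m] [Fintype n]
    [DecidableEq n] {S : Matrix n n ℝ} (hS : S.PosSemidef) (s : Finset ι) (A : ι → Matrix m n ℝ)
    (j : m) (k : n) :
    ∑ h ∈ s, (A h * S) j k ^ 2 ≤ (∑ h ∈ s, (A h * S * (A h)ᵀ) j j) * S k k := by
  rw [sum_mul]
  exact sum_le_sum fun h _ ↦ hS.sq_mul_apply_le (A h) j k

theorem gfevd_entry_mem_unit_interval_general {N H : ℕ} (Sig : Matrix (Fin N) (Fin N) ℝ)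
    (hS : Sig.PosSemidef) (k : Fin N)
    (Ψ : ℕ → Matrix (Fin N) (Fin N) ℝ) (j : Fin N) :
    0 ≤ ((Sig k k)⁻¹ * ∑ h ∈ range (H + 1), ((Ψ h * Sig) j k) ^ 2) /
          (∑ h ∈ range (H + 1), (Ψ h * Sig * (Ψ h)ᵀ) j j) ∧
      ((Sig k k)⁻¹ * ∑ h ∈ range (H + 1), ((Ψ h * Sig) j k) ^ 2) /
          (∑ h ∈ range (H + 1), (Ψ h * Sig * (Ψ h)ᵀ) j j) ≤ 1 := by
  have hSkk : 0 ≤ Sig k k := hS.diag_nonneg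
  have hden : 0 ≤ ∑ h ∈ range (H + 1), (Ψ h * Sig * (Ψ h)ᵀ) j j :=
    sum_nonneg fun h _ ↦ (hS.mul_mul_conjTranspose_same (Ψ h)).diag_nonneg
  have hnum : 0 ≤ (Sig k k)⁻¹ * ∑ h ∈ range (H + 1), ((Ψ h * Sig) j k) ^ 2 :=
    mul_nonneg (inv_nonneg.2 hSkk) (sum_nonneg fun h _ ↦ sq_nonneg _)
  refine ⟨div_nonneg hnum hden, div_le_one_of_le₀ ?_ hden⟩
  exact inv_mul_le_of_le_mul₀ hSkk hden (by
    rw [mul_comm]; exact hS.sum_sq_mul_apply_le (range (H + 1)) Ψ j k)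

/-- the generalized forecast-error variance decomposition entry
`θ_{jk} = (Σ_{kk}⁻¹ ∑_{h=0}^H ((Ψ_h Σ)_{jk})²) / (∑_{h=0}^H (Ψ_h Σ Ψ_hᵀ)_{jj})`
lies in `[0, 1]` whenever `Σ` is symmetric positive semidefinite, `Σ_{kk} > 0` and the
denominator is strictly positive. -/
theorem gfevd_entry_mem_unit_interval {N H : ℕ} (Sig : Matrix (Fin N) (Fin N) ℝ)
    (hS : Sig.PosSemidef) (k : Fin N) (hk : 0 < Sig k k)
    (Ψ : ℕ → Matrix (Fin N) (Fin N) ℝ) (j : Fin N)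
    (hD : 0 < ∑ h ∈ range (H + 1), (Ψ h * Sig * (Ψ h)ᵀ) j j) :
    0 ≤ ((Sig k k)⁻¹ * ∑ h ∈ range (H + 1), ((Ψ h * Sig) j k) ^ 2) /
          (∑ h ∈ range (H + 1), (Ψ h * Sig * (Ψ h)ᵀ) j j) ∧
      ((Sig k k)⁻¹ * ∑ h ∈ range (H + 1), ((Ψ h * Sig) j k) ^ 2) /
          (∑ h ∈ range (H + 1), (Ψ h * Sig * (Ψ h)ᵀ) j j) ≤ 1 :=
  gfevd_entry_mem_unit_interval_general Sig hS k Ψ j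
end

section
/- Let ε_0, …, ε_H be independent mean-zero square-integrable random vectors in ℝ^N, each with covariance matrix Σ, let k be an index with Σ_{kk} ≠ 0, and let Ψ_0, …, Ψ_H be real N×N matrices. Define the conditional forecast error ξ^{k} := Σ_{h=0}^H Ψ_h (ε_h − Σ_{kk}^{-1} Σ_{·k} (ε_h)_k). Then the covariance matrix of ξ^{k} equals Ω^{k,H} = Σ_{h=0}^H Ψ_h Σ Ψ_hᵀ − Σ_{kk}^{-1} Σ_{h=0}^H Ψ_h Σ_{·k} Σ_{·k}ᵀ Ψ_hᵀ; that is, E[ξ^{k}_i ξ^{k}_j] = (Ω^{k,H})_{ij} for all indices i, j. -/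
/-!
Writing `P = 1 - Σ_kk⁻¹ Σ_{·k} e_kᵀ`, the conditional forecast error is `∑_h (Ψ_h P) ε_h`, a sum of
independent centred random vectors, so its cross terms vanish and its covariance is
`∑_h Ψ_h (P Σ Pᵀ) Ψ_hᵀ`. Since `Σ` is symmetric, `P Σ Pᵀ = Σ - Σ_kk⁻¹ Σ_{·k} Σ_{·k}ᵀ`.
-/

open Matrix Finset MeasureTheory ProbabilityTheory

section SecondMoment

variable {Ω m n : Type*} [MeasurableSpace Ω] {μ : Measure Ω}

/-- `E[X Xᵀ]`; for a mean-zero `X` this is its covariance matrix. -/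
noncomputable def secondMomentMatrix (μ : Measure Ω) (X : Ω → n → ℝ) : Matrix n n ℝ :=
  Matrix.of fun a b => ∫ ω, X ω a * X ω b ∂μ

lemma secondMomentMatrix_transpose (X : Ω → n → ℝ) :
    (secondMomentMatrix μ X)ᵀ = secondMomentMatrix μ X := by
  ext a b
  simp only [secondMomentMatrix, transpose_apply, of_apply, mul_comm]

lemma memLp_mulVec_apply [Fintype n] {p : ENNReal} {X : Ω → n → ℝ}
    (hX : ∀ b, MemLp (fun ω => X ω b) p μ) (A : Matrix m n ℝ) (a : m) :
    MemLp (fun ω => (A *ᵥ X ω) a) p μ :=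
  memLp_finsetSum _ fun b _ => (hX b).const_mul (A a b)

lemma integral_mulVec_apply [Fintype n] {X : Ω → n → ℝ}
    (hX : ∀ b, Integrable (fun ω => X ω b) μ) (A : Matrix m n ℝ) (a : m) :
    ∫ ω, (A *ᵥ X ω) a ∂μ = (A *ᵥ fun b => ∫ ω, X ω b ∂μ) a := by
  simp only [mulVec, dotProduct]
  rw [integral_finsetSum _ fun b _ => (hX b).const_mul (A a b)]
  simp only [integral_const_mul]

lemma secondMomentMatrix_mulVec [Fintype n] {X : Ω → n → ℝ}
    (hX : ∀ b, MemLp (fun ω => X ω b) 2 μ) (A : Matrix m n ℝ) :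
    secondMomentMatrix μ (fun ω => A *ᵥ X ω) = A * secondMomentMatrix μ X * Aᵀ := by
  have hint : ∀ c d, Integrable (fun ω => X ω c * X ω d) μ := fun c d =>
    (hX c).integrable_mul (hX d)
  ext a b
  have hexpand : ∀ ω, (A *ᵥ X ω) a * (A *ᵥ X ω) b
      = ∑ c, ∑ d, A a c * A b d * (X ω c * X ω d) := fun ω => by
    simp only [mulVec, dotProduct, Finset.sum_mul_sum]
    exact Finset.sum_congr rfl fun c _ => Finset.sum_congr rfl fun d _ => by ring
  simp only [secondMomentMatrix, of_apply, hexpand, mul_apply, transpose_apply, Finset.sum_mul]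
  rw [integral_finsetSum _ fun c _ => integrable_finsetSum _ fun d _ => (hint c d).const_mul _,
    Finset.sum_comm]
  refine Finset.sum_congr rfl fun c _ => ?_
  rw [integral_finsetSum _ fun d _ => (hint c d).const_mul _]
  exact Finset.sum_congr rfl fun d _ => by rw [integral_const_mul]; ring

lemma integral_mul_eq_zero_of_iIndepFun {ι : Type*} {X : ι → Ω → n → ℝ}
    (hindep : iIndepFun X μ) (hX : ∀ h b, MemLp (fun ω => X h ω b) 2 μ)
    (hmean : ∀ h b, ∫ ω, X h ω b ∂μ = 0)
    {h h' : ι} (hne : h ≠ h') (a b : n) : ∫ ω, X h ω a * X h' ω b ∂μ = 0 := by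
  have hab : IndepFun (fun ω => X h ω a) (fun ω => X h' ω b) μ :=
    (hindep.indepFun hne).comp (measurable_pi_apply a) (measurable_pi_apply b)
  have hfactor := hab.integral_mul_eq_mul_integral (hX h a).aestronglyMeasurable
    (hX h' b).aestronglyMeasurable
  simpa only [Pi.mul_apply, hmean, mul_zero] using hfactor

lemma secondMomentMatrix_sum_of_iIndepFun {ι : Type*} [Fintype ι] [Fintype n]
    {X : ι → Ω → n → ℝ} (hindep : iIndepFun X μ) (hX : ∀ h b, MemLp (fun ω => X h ω b) 2 μ)
    (hmean : ∀ h b, ∫ ω, X h ω b ∂μ = 0) :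
    secondMomentMatrix μ (fun ω => ∑ h, X h ω) = ∑ h, secondMomentMatrix μ (X h) := by
  classical
  ext a b
  have hint : ∀ h h', Integrable (fun ω => X h ω a * X h' ω b) μ := fun h h' =>
    (hX h a).integrable_mul (hX h' b)
  simp only [secondMomentMatrix, of_apply, Finset.sum_apply, Matrix.sum_apply,
    Finset.sum_mul_sum]
  rw [integral_finsetSum _ fun h _ => integrable_finsetSum _ fun h' _ => hint h h']
  refine Finset.sum_congr rfl fun h _ => ?_
  rw [integral_finsetSum _ fun h' _ => hint h h', Finset.sum_eq_single h]
  · exact fun h' _ hne => integral_mul_eq_zero_of_iIndepFun hindep hX hmean hne.symm a b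
  · simp

end SecondMoment

section Conditioning

variable {K n : Type*} [Field K] [Fintype n] [DecidableEq n]

/-- `ε ↦ conditioningMatrix Sig k *ᵥ ε` subtracts from `ε` its linear projection
`Sig_{kk}⁻¹ Sig_{·k} ε_k` on the `k`-th coordinate. -/
def conditioningMatrix (Sig : Matrix n n K) (k : n) : Matrix n n K :=
  1 - (Sig k k)⁻¹ • vecMulVec (Sig *ᵥ Pi.single k 1) (Pi.single k 1)

lemma conditioningMatrix_mulVec (Sig : Matrix n n K) (k : n) (v : n → K) :
    conditioningMatrix Sig k *ᵥ v
      = fun a => v a - (Sig k k)⁻¹ * (Sig *ᵥ Pi.single k 1) a * v k := by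
  ext a
  simp only [conditioningMatrix, sub_mulVec, one_mulVec, smul_mulVec, vecMulVec_mulVec,
    mulVec_single_one, single_dotProduct, one_mul, Pi.sub_apply, Pi.smul_apply, col_apply,
    op_smul_eq_smul, smul_eq_mul]
  ring

lemma conditioningMatrix_mul_mul_transpose {Sig : Matrix n n K} (hSig : Sigᵀ = Sig) (k : n) :
    conditioningMatrix Sig k * Sig * (conditioningMatrix Sig k)ᵀ
      = Sig - (Sig k k)⁻¹ • vecMulVec (Sig *ᵥ Pi.single k 1) (Sig *ᵥ Pi.single k 1) := by
  have hsymm : ∀ a b, Sig b a = Sig a b := fun a b => by rw [← transpose_apply Sig, hSig]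
  ext a b
  simp only [conditioningMatrix, mulVec_single_one, sub_mul, one_mul,
    Algebra.smul_mul_assoc, transpose_sub, transpose_one, transpose_smul, transpose_vecMulVec,
    mul_apply, Matrix.sub_apply, Matrix.smul_apply, vecMulVec_apply, col_apply, hsymm,
    Pi.single_apply, mul_ite, mul_one, mul_zero, ite_mul, zero_mul, sum_ite_eq', mem_univ,
    ↓reduceIte, smul_eq_mul, one_apply, mul_sub, sum_sub_distrib, sub_eq_self]
  have hc : (Sig k k)⁻¹ * Sig k k * (Sig k k)⁻¹ = (Sig k k)⁻¹ := by
    simpa using mul_inv_mul_cancel (Sig k k)⁻¹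
  linear_combination (-Sig k a * Sig k b) * hc

end Conditioning

theorem conditional_forecast_error_covariance_general {N H : ℕ} {Ω : Type*} [MeasurableSpace Ω]
    {μ : Measure Ω} [IsProbabilityMeasure μ]
    (Sig : Matrix (Fin N) (Fin N) ℝ) (ε : Fin (H + 1) → Ω → Fin N → ℝ)
    (hindep : iIndepFun ε μ)
    (hL2 : ∀ h i, MemLp (fun ω => ε h ω i) 2 μ)
    (hmean : ∀ h i, ∫ ω, ε h ω i ∂μ = 0)
    (hcov : ∀ h i j, ∫ ω, ε h ω i * ε h ω j ∂μ = Sig i j)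
    (k : Fin N)
    (Ψ : Fin (H + 1) → Matrix (Fin N) (Fin N) ℝ) (i j : Fin N) :
    ∫ ω, (∑ h, (Ψ h).mulVec
            (fun a => ε h ω a - (Sig k k)⁻¹ * Sig.mulVec (Pi.single k 1) a * ε h ω k)) i *
         (∑ h, (Ψ h).mulVec
            (fun a => ε h ω a - (Sig k k)⁻¹ * Sig.mulVec (Pi.single k 1) a * ε h ω k)) j ∂μ
      = ((∑ h, Ψ h * Sig * (Ψ h)ᵀ) -
          (Sig k k)⁻¹ • ∑ h, Ψ h *
            Matrix.vecMulVec (Sig.mulVec (Pi.single k 1)) (Sig.mulVec (Pi.single k 1)) *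
              (Ψ h)ᵀ) i j := by
  set P := conditioningMatrix Sig k
  have hSig : ∀ h, secondMomentMatrix μ (ε h) = Sig := fun h => ext (hcov h)
  have hSigT : Sigᵀ = Sig := hSig 0 ▸ secondMomentMatrix_transpose (ε 0)
  set X : Fin (H + 1) → Ω → Fin N → ℝ := fun h ω => (Ψ h * P) *ᵥ ε h ω
  have hXindep : iIndepFun X μ :=
    hindep.comp (fun h v => (Ψ h * P) *ᵥ v) fun _ =>
      (continuous_const.matrix_mulVec continuous_id).measurable
  have hXL2 : ∀ h a, MemLp (fun ω => X h ω a) 2 μ := fun h => memLp_mulVec_apply (hL2 h) _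
  have hXmean : ∀ h a, ∫ ω, X h ω a ∂μ = 0 := fun h a => by
    rw [integral_mulVec_apply fun b => (hL2 h b).integrable one_le_two]
    simp only [hmean]
    exact congrFun (mulVec_zero _) a
  calc _ = secondMomentMatrix μ (fun ω => ∑ h, X h ω) i j := by
        simp only [secondMomentMatrix, of_apply, X, ← mulVec_mulVec, P, conditioningMatrix_mulVec]
    _ = (∑ h, Ψ h * (P * Sig * Pᵀ) * (Ψ h)ᵀ) i j := by
        rw [secondMomentMatrix_sum_of_iIndepFun hXindep hXL2 hXmean]
        simp only [X, secondMomentMatrix_mulVec (hL2 _), hSig, transpose_mul, Matrix.mul_assoc]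
    _ = _ := by
        rw [conditioningMatrix_mul_mul_transpose hSigT]
        simp only [Matrix.mul_sub, Matrix.sub_mul, sum_sub_distrib, Matrix.mul_smul,
          Matrix.smul_mul, Finset.smul_sum]

/-- for independent mean-zero square-integrable random vectors `ε_0, …, ε_H`
with common covariance `Σ`, `Σ_{kk} ≠ 0`, and matrices `Ψ_0, …, Ψ_H`, the conditional
forecast error `ξ^k = ∑_{h=0}^H Ψ_h (ε_h − Σ_{kk}⁻¹ Σ_{·k} (ε_h)_k)` has covariance matrix
`Ω^{k,H} = ∑_h Ψ_h Σ Ψ_hᵀ − Σ_{kk}⁻¹ ∑_h Ψ_h Σ_{·k} Σ_{·k}ᵀ Ψ_hᵀ`. -/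
theorem conditional_forecast_error_covariance {N H : ℕ} {Ω : Type*} [MeasurableSpace Ω]
    {μ : Measure Ω} [IsProbabilityMeasure μ]
    (Sig : Matrix (Fin N) (Fin N) ℝ) (ε : Fin (H + 1) → Ω → Fin N → ℝ)
    (hmeas : ∀ h, Measurable (ε h))
    (hindep : iIndepFun ε μ)
    (hL2 : ∀ h i, MemLp (fun ω => ε h ω i) 2 μ)
    (hmean : ∀ h i, ∫ ω, ε h ω i ∂μ = 0)
    (hcov : ∀ h i j, ∫ ω, ε h ω i * ε h ω j ∂μ = Sig i j)
    (k : Fin N) (hk : Sig k k ≠ 0)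
    (Ψ : Fin (H + 1) → Matrix (Fin N) (Fin N) ℝ) (i j : Fin N) :
    ∫ ω, (∑ h, (Ψ h).mulVec
            (fun a => ε h ω a - (Sig k k)⁻¹ * Sig.mulVec (Pi.single k 1) a * ε h ω k)) i *
         (∑ h, (Ψ h).mulVec
            (fun a => ε h ω a - (Sig k k)⁻¹ * Sig.mulVec (Pi.single k 1) a * ε h ω k)) j ∂μ
      = ((∑ h, Ψ h * Sig * (Ψ h)ᵀ) -
          (Sig k k)⁻¹ • ∑ h, Ψ h *
            Matrix.vecMulVec (Sig.mulVec (Pi.single k 1)) (Sig.mulVec (Pi.single k 1)) *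
              (Ψ h)ᵀ) i j :=
  conditional_forecast_error_covariance_general Sig ε hindep hL2 hmean hcov k Ψ i j
end

section
/- (Spanning identity underlying the model-free implied variance.) For all real numbers S > 0 and P > 0, the squared log return satisfies (log(S/P))² = ∫_P^∞ (2(1 − log(K/P))/K²) · max(S − K, 0) dK + ∫_0^P (2(1 + log(P/K))/K²) · max(K − S, 0) dK, where both integrals are finite. -/
open MeasureTheory Set

/-!
`K ↦ log (K / P) ^ 2` vanishes together with its derivative at `K = P` and has second derivative
`2 (1 - log (K / P)) / K ²`, so the identity is the Carr–Madan spanning formula for this payoff: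
Taylor's formula with integral remainder, `f S = f P + f' P (S - P) + ∫_P^S f'' K (S - K) dK`,
where the remainder is read as a call integral when `P ≤ S` and as a put integral when `S ≤ P`.
-/

theorem intervalIntegral.integral_mul_sub_eq_of_hasDerivAt {f f' f'' : ℝ → ℝ} {a b : ℝ}
    (hf : ∀ x ∈ uIcc a b, HasDerivAt f (f' x) x) (hf' : ∀ x ∈ uIcc a b, HasDerivAt f' (f'' x) x)
    (hf'' : IntervalIntegrable f'' volume a b) :
    ∫ x in a..b, f'' x * (b - x) = f b - f a - f' a * (b - a) := by
  have hF : ∀ x ∈ uIcc a b,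
      HasDerivAt (fun y => f' y * (b - y) + f y) (f'' x * (b - x)) x := fun x hx =>
    (((hf' x hx).mul ((hasDerivAt_id' x).const_sub b)).add (hf x hx)).congr_deriv (by ring)
  rw [intervalIntegral.integral_eq_sub_of_hasDerivAt hF
    (hf''.mul_continuousOn (continuousOn_const.sub continuousOn_id))]
  ring

section Payoff

variable {g : ℝ → ℝ} {a S P : ℝ}

theorem eqOn_mul_max_sub_indicator_Ioi :
    EqOn (fun K => g K * max (S - K) 0) ((Ioo P S).indicator fun K => g K * (S - K)) (Ioi P) := by
  intro K (hK : P < K)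
  rcases lt_or_ge K S with hKS | hSK
  · simp [indicator_of_mem (show K ∈ Ioo P S from ⟨hK, hKS⟩), hKS.le]
  · simp [hSK]

theorem eqOn_mul_max_sub_indicator_Ioo :
    EqOn (fun K => g K * max (K - S) 0) ((Ioo S P).indicator fun K => g K * (K - S)) (Ioo a P) := by
  intro K hK
  rcases lt_or_ge S K with hSK | hKS
  · simp [indicator_of_mem (show K ∈ Ioo S P from ⟨hSK, hK.2⟩), hSK.le]
  · simp [hKS]

theorem integrableOn_Ioi_mul_max_sub (hg : IntegrableOn (fun K => g K * (S - K)) (Ioo P S)) :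
    IntegrableOn (fun K => g K * max (S - K) 0) (Ioi P) :=
  (integrableOn_congr_fun eqOn_mul_max_sub_indicator_Ioi measurableSet_Ioi).mpr
    (hg.integrable_indicator measurableSet_Ioo).integrableOn

theorem integrableOn_Ioo_mul_max_sub (hg : IntegrableOn (fun K => g K * (K - S)) (Ioo S P)) :
    IntegrableOn (fun K => g K * max (K - S) 0) (Ioo a P) :=
  (integrableOn_congr_fun eqOn_mul_max_sub_indicator_Ioo measurableSet_Ioo).mpr
    (hg.integrable_indicator measurableSet_Ioo).integrableOn

theorem setIntegral_Ioi_mul_max_sub :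
    ∫ K in Ioi P, g K * max (S - K) 0 = ∫ K in Ioo P S, g K * (S - K) := by
  rw [setIntegral_congr_fun measurableSet_Ioi eqOn_mul_max_sub_indicator_Ioi,
    setIntegral_indicator measurableSet_Ioo, inter_eq_right.mpr Ioo_subset_Ioi_self]

theorem setIntegral_Ioo_mul_max_sub (ha : a ≤ S) :
    ∫ K in Ioo a P, g K * max (K - S) 0 = ∫ K in Ioo S P, g K * (K - S) := by
  rw [setIntegral_congr_fun measurableSet_Ioo eqOn_mul_max_sub_indicator_Ioo,
    setIntegral_indicator measurableSet_Ioo, inter_eq_right.mpr (Ioo_subset_Ioo_left ha)]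

end Payoff

theorem setIntegral_Ioo_eq_intervalIntegral {h : ℝ → ℝ} {a b : ℝ} (hab : a ≤ b) :
    ∫ x in Ioo a b, h x = ∫ x in a..b, h x := by
  rw [intervalIntegral.integral_of_le hab, integral_Ioc_eq_integral_Ioo]

theorem carr_madan_spanning {f f' f'' : ℝ → ℝ} {a S P : ℝ} (haS : a < S) (haP : a < P)
    (hf : ∀ x ∈ Ioi a, HasDerivAt f (f' x) x) (hf' : ∀ x ∈ Ioi a, HasDerivAt f' (f'' x) x)
    (hf'' : ContinuousOn f'' (Ioi a)) :
    IntegrableOn (fun K => f'' K * max (S - K) 0) (Ioi P) ∧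
    IntegrableOn (fun K => f'' K * max (K - S) 0) (Ioo a P) ∧
    f S = f P + f' P * (S - P)
      + ((∫ K in Ioi P, f'' K * max (S - K) 0) + ∫ K in Ioo a P, f'' K * max (K - S) 0) := by
  have hsub : uIcc P S ⊆ Ioi a := fun x hx => lt_of_lt_of_le (lt_min haP haS) hx.1
  have hcont : ContinuousOn f'' (uIcc P S) := hf''.mono hsub
  have hcall : IntegrableOn (fun K => f'' K * (S - K)) (uIcc P S) :=
    (hcont.mul (continuousOn_const.sub continuousOn_id)).integrableOn_uIcc
  have hput : IntegrableOn (fun K => f'' K * (K - S)) (uIcc P S) :=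
    (hcont.mul (continuousOn_id.sub continuousOn_const)).integrableOn_uIcc
  have htaylor : ∫ K in P..S, f'' K * (S - K) = f S - f P - f' P * (S - P) :=
    intervalIntegral.integral_mul_sub_eq_of_hasDerivAt (fun x hx => hf x (hsub hx))
      (fun x hx => hf' x (hsub hx)) hcont.intervalIntegrable
  refine
    ⟨integrableOn_Ioi_mul_max_sub (hcall.mono_set (Ioo_subset_Icc_self.trans Icc_subset_uIcc)),
    integrableOn_Ioo_mul_max_sub (hput.mono_set (Ioo_subset_Icc_self.trans Icc_subset_uIcc')),
    ?_⟩
  rw [setIntegral_Ioi_mul_max_sub, setIntegral_Ioo_mul_max_sub haS.le]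
  rcases le_total P S with hPS | hSP
  · rw [Ioo_eq_empty_of_le hPS, setIntegral_Ioo_eq_intervalIntegral hPS, htaylor]
    simp only [Measure.restrict_empty, integral_zero_measure]
    ring
  · have hput_eq : ∫ K in S..P, f'' K * (K - S) = ∫ K in P..S, f'' K * (S - K) := by
      rw [intervalIntegral.integral_symm, ← intervalIntegral.integral_neg]
      congr 1 with K
      ring
    rw [Ioo_eq_empty_of_le hSP, setIntegral_Ioo_eq_intervalIntegral hSP, hput_eq, htaylor]
    simp only [Measure.restrict_empty, integral_zero_measure]
    ring

section LogSquare

variable {P x : ℝ}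

theorem hasDerivAt_log_div_const (hx : x ≠ 0) (hP : P ≠ 0) :
    HasDerivAt (fun K => Real.log (K / P)) x⁻¹ x :=
  (((hasDerivAt_id' x).div_const P).log (div_ne_zero hx hP)).congr_deriv (by field_simp)

theorem hasDerivAt_log_div_const_sq (hx : x ≠ 0) (hP : P ≠ 0) :
    HasDerivAt (fun K => Real.log (K / P) ^ 2) (2 * Real.log (x / P) / x) x :=
  ((hasDerivAt_log_div_const hx hP).pow 2).congr_deriv
    (by simp only [Nat.cast_ofNat, Nat.add_one_sub_one, pow_one]; ring)

theorem hasDerivAt_two_mul_log_div_const_div (hx : x ≠ 0) (hP : P ≠ 0) :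
    HasDerivAt (fun K => 2 * Real.log (K / P) / K) (2 * (1 - Real.log (x / P)) / x ^ 2) x :=
  (((hasDerivAt_log_div_const hx hP).const_mul 2).div (hasDerivAt_id' x) hx).congr_deriv
    (by field_simp)

end LogSquare

/-- spanning identity underlying the model-free implied variance: for
`S, P > 0`,
`(log(S/P))² = ∫_P^∞ (2(1 − log(K/P))/K²) max(S−K,0) dK
             + ∫_0^P (2(1 + log(P/K))/K²) max(K−S,0) dK`,
and both integrals are finite. -/
theorem log_return_sq_spanning (S P : ℝ) (hS : 0 < S) (hP : 0 < P) :
    IntegrableOn (fun K => 2 * (1 - Real.log (K / P)) / K ^ 2 * max (S - K) 0) (Ioi P) ∧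
    IntegrableOn (fun K => 2 * (1 + Real.log (P / K)) / K ^ 2 * max (K - S) 0) (Ioo 0 P) ∧
    (Real.log (S / P)) ^ 2
      = (∫ K in Ioi P, 2 * (1 - Real.log (K / P)) / K ^ 2 * max (S - K) 0)
        + ∫ K in Ioo 0 P, 2 * (1 + Real.log (P / K)) / K ^ 2 * max (K - S) 0 := by
  have hput_weight : ∀ K, 1 + Real.log (P / K) = 1 - Real.log (K / P) := fun K => by
    rw [← inv_div, Real.log_inv, sub_eq_add_neg]
  have hcont : ContinuousOn (fun K => 2 * (1 - Real.log (K / P)) / K ^ 2) (Ioi 0) := by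
    fun_prop (disch := intro x (hx : 0 < x); positivity)
  obtain ⟨hcall, hput, hspan⟩ := carr_madan_spanning hS hP
    (fun x (hx : 0 < x) => hasDerivAt_log_div_const_sq hx.ne' hP.ne')
    (fun x (hx : 0 < x) => hasDerivAt_two_mul_log_div_const_div hx.ne' hP.ne') hcont
  simp only [hput_weight]
  refine ⟨hcall, hput, ?_⟩
  simpa [div_self hP.ne'] using hspan
end
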